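/- For a prime p, integers a, b, s with gcd(b,p)=1, the Fermat quotient satisfies q_p((a+s)p+b) ≡ q_p(ap+b) - s·b^{-1} (mod p), where b^{-1} denotes the inverse of b mod p. -/

import Mathlib

/-- Fermat quotient: `q_p(n) = (n^(p-1) - 1)/p`. -/
def fermatQuotient (p : ℕ) (n : ℤ) : ℤ := (n ^ (p - 1) - 1) / p

/-! By Fermat's little theorem `p` divides `n ^ (p - 1) - 1`, so `p * q_p(n)` recovers it exactly.
Expanding `(n + p s) ^ (p - 1)` binomially modulo `p ^ 2` and dividing by `p` gives
`q_p(n + p s) ≡ q_p(n) + (p - 1) n ^ (p - 2) s ≡ q_p(n) - n ^ (p - 2) s (mod p)`,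
and `n ^ (p - 2) ≡ b ^ (p - 2) ≡ b⁻¹ (mod p)` for `n = a p + b`. -/

theorem mul_fermatQuotient {p : ℕ} (hp : p.Prime) {n : ℤ} (hn : IsCoprime n p) :
    p * fermatQuotient p n = n ^ (p - 1) - 1 :=
  Int.mul_ediv_cancel' (Int.ModEq.pow_card_sub_one_eq_one hp hn).symm.dvd

theorem fermatQuotient_add_mul_modEq {p : ℕ} (hp : p.Prime) {n : ℤ} (hn : IsCoprime n p)
    (s : ℤ) :
    fermatQuotient p (n + p * s) ≡ fermatQuotient p n - n ^ (p - 2) * s [ZMOD p] := by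
  have hp0 : (p : ℤ) ≠ 0 := by exact_mod_cast hp.ne_zero
  have hbinom : (p : ℤ) ^ 2 ∣ (n + p * s) ^ (p - 1) - n ^ (p - 2) * (p * s) * (p - 1 : ℕ)
      - n ^ (p - 1) := by
    have h := sq_dvd_add_pow_sub_sub ((p : ℤ) * s) n (p - 1)
    rw [show p - 1 - 1 = p - 2 by omega] at h
    exact (pow_dvd_pow_of_dvd (dvd_mul_right _ _) 2).trans h
  have hdiv : (p : ℤ) ∣ fermatQuotient p (n + p * s) - fermatQuotient p n
      - (p - 1) * n ^ (p - 2) * s := by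
    refine Int.dvd_of_mul_dvd_mul_left hp0 ?_
    rw [mul_sub, mul_sub, mul_fermatQuotient hp (hn.add_mul_left_left s), mul_fermatQuotient hp hn]
    convert hbinom using 1
    · ring
    · push_cast [Nat.cast_sub hp.one_le]
      ring
  refine (Int.modEq_iff_dvd.2 ?_).symm
  rw [show fermatQuotient p (n + p * s) - (fermatQuotient p n - n ^ (p - 2) * s)
      = fermatQuotient p (n + p * s) - fermatQuotient p n - (p - 1) * n ^ (p - 2) * s
        + p * (n ^ (p - 2) * s) by ring]
  exact dvd_add hdiv (dvd_mul_right _ _)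

theorem Int.ModEq.pow_card_sub_two_eq_of_mul_modEq_one {p : ℕ} (hp : p.Prime) {b c : ℤ}
    (hb : IsCoprime b p) (hc : b * c ≡ 1 [ZMOD p]) : b ^ (p - 2) ≡ c [ZMOD p] := by
  have hexp : p - 2 + 1 = p - 1 := by have := hp.two_le; omega
  calc b ^ (p - 2) = b ^ (p - 2) * 1 := (mul_one _).symm
    _ ≡ b ^ (p - 2) * (b * c) [ZMOD p] := (hc.mul_left _).symm
    _ = b ^ (p - 1) * c := by rw [← hexp, pow_succ]; ring
    _ ≡ 1 * c [ZMOD p] := (Int.ModEq.pow_card_sub_one_eq_one hp hb).mul_right c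
    _ = c := one_mul c

theorem fq_row_shift (p : ℕ) (hp : p.Prime) (a b s c : ℤ)
    (hgcd : Int.gcd b p = 1) (hc : Int.ModEq p (b * c) 1) :
    Int.ModEq p (fermatQuotient p ((a + s) * p + b))
      (fermatQuotient p (a * p + b) - s * c) := by
  have hb : IsCoprime b p := Int.isCoprime_iff_gcd_eq_one.2 hgcd
  have hinv : (b + p * a) ^ (p - 2) ≡ c [ZMOD p] :=
    (Int.ModEq.pow _ (Int.add_mul_emod_self_left b p a)).trans
      (Int.ModEq.pow_card_sub_two_eq_of_mul_modEq_one hp hb hc)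
  calc fermatQuotient p ((a + s) * p + b) = fermatQuotient p (b + p * a + p * s) := by ring_nf
    _ ≡ fermatQuotient p (b + p * a) - (b + p * a) ^ (p - 2) * s [ZMOD p] :=
      fermatQuotient_add_mul_modEq hp (hb.add_mul_left_left a) s
    _ ≡ fermatQuotient p (b + p * a) - c * s [ZMOD p] := (hinv.mul_right s).sub_left _
    _ = fermatQuotient p (a * p + b) - s * c := by ring_nf
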